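/- arXiv:1807.02753 — 2 statements merged into one kernel-verified Lean document; each statement's English description precedes it below -/
import Mathlib

section
/- Let a, b ≥ 1 be reals with ab ≥ 1, and let f be a function on the free monoid on two generators g₁, g₂ with f(e) = 1 satisfying: f(w g₁) = a·f(w) if w ends in g₁ or w = e, and max(f(w g₁), f(w')) = a·f(w) when w ends in g₂ with w = w' g₂; and symmetrically for g₂ with constant b. Then f(w) = a^n · b^m, where n and m are the numbers of occurrences of g₁ and g₂ in w, respectively. -/
/-- Auxiliary: if `max x u = a*V` with `b*u = V`, `V ≤ b*x` and `V > 0`, then `x = a*V`. -/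
lemma aux_step_norm (a b V u x : ℝ) (ha : 0 < a) (hb : 0 < b) (hVpos : 0 < V)
    (hVu : b * u = V) (hmax : max x u = a * V) (hge : V ≤ b * x) : x = a * V := by
  have hle : x ≤ a * V := hmax ▸ le_max_left x u
  rcases max_choice x u with h | h
  · exact h.symm.trans hmax
  · have hu : u = a * V := h.symm.trans hmax
    have hab : a * b = 1 := mul_left_cancel₀ hVpos.ne' (by linear_combination hVu - b * hu)
    have h2 : a * V ≤ a * (b * x) := mul_le_mul_of_nonneg_left hge ha.le
    have h3 : a * (b * x) = x := by rw [show a * (b * x) = (a * b) * x by ring, hab, one_mul]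
    exact le_antisymm hle (h3 ▸ h2)

/-- Words in the free monoid on two generators are encoded as
`List Bool` (`true` = g₁, `false` = g₂), with letters appended on the right.
Given `a, b ≥ 1` with `ab ≥ 1` and `f` satisfying the fusion recurrences of `U_F⁺`
(`f(wg₁) = a·f(w)` if `w` is empty or ends with `g₁`;
`max (f(wg₁)) (f(w')) = a·f(w)` if `w = w'g₂` ends with `g₂`; symmetrically for `g₂`
with constant `b`), we get `f(w) = aⁿ·bᵐ` where `n, m` are the numbers of
occurrences of `g₁, g₂` in `w`. -/
theorem free_monoid_norm_formula (a b : ℝ) (ha : 1 ≤ a) (hb : 1 ≤ b)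
    (hab : 1 ≤ a * b) (f : List Bool → ℝ) (h0 : f [] = 1)
    (h1 : ∀ w : List Bool, (w = [] ∨ w.getLast? = some true) →
      f (w ++ [true]) = a * f w)
    (h2 : ∀ w : List Bool, w.getLast? = some false →
      max (f (w ++ [true])) (f w.dropLast) = a * f w)
    (h3 : ∀ w : List Bool, (w = [] ∨ w.getLast? = some false) →
      f (w ++ [false]) = b * f w)
    (h4 : ∀ w : List Bool, w.getLast? = some true →
      max (f (w ++ [false])) (f w.dropLast) = b * f w) :
    ∀ w : List Bool, f w = a ^ (w.count true) * b ^ (w.count false) := by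
  have hapos : (0:ℝ) < a := lt_of_lt_of_le one_pos ha
  have hbpos : (0:ℝ) < b := lt_of_lt_of_le one_pos hb
  suffices H : ∀ (n : ℕ) (w : List Bool), w.length ≤ n →
      f w = a ^ (w.count true) * b ^ (w.count false) by
    exact fun w => H w.length w le_rfl
  intro n
  induction n with
  | zero =>
    intro w hw
    obtain rfl := List.length_eq_zero_iff.mp (Nat.le_zero.mp hw)
    simp [h0]
  | succ n ih =>
    intro w hw
    rcases w.eq_nil_or_concat with rfl | ⟨v, x, rfl⟩
    · simp [h0]
    rw [List.concat_eq_append] at hw ⊢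
    have hvlen : v.length ≤ n := by simp at hw; omega
    have hfv := ih v hvlen
    have hfvpos : 0 < f v := by rw [hfv]; positivity
    have key : f (v ++ [x]) = (if x then a else b) * f v := by
      cases x with
      | true =>
        simp only [if_true]
        rcases v.eq_nil_or_concat with rfl | ⟨u, y, rfl⟩
        · exact h1 [] (Or.inl rfl)
        rw [List.concat_eq_append] at *
        cases y with
        | true => exact h1 (u ++ [true]) (Or.inr (by simp))
        | false =>
          have hfu := ih u (by simp at hvlen; omega)
          have hVu : b * f u = f (u ++ [false]) := by
            rw [hfu, hfv]; simp [List.count_append]; ring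
          have hmax := h2 (u ++ [false]) (by simp)
          rw [List.dropLast_concat] at hmax
          have hge := h4 ((u ++ [false]) ++ [true]) (by simp)
          rw [List.dropLast_concat] at hge
          have hge' : f (u ++ [false]) ≤ b * f ((u ++ [false]) ++ [true]) :=
            hge ▸ le_max_right _ _
          exact aux_step_norm a b (f (u ++ [false])) (f u) (f ((u ++ [false]) ++ [true]))
            hapos hbpos hfvpos hVu hmax hge'
      | false =>
        show f (v ++ [false]) = b * f v
        rcases v.eq_nil_or_concat with rfl | ⟨u, y, rfl⟩
        · exact h3 [] (Or.inl rfl)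
        rw [List.concat_eq_append] at *
        cases y with
        | false => exact h3 (u ++ [false]) (Or.inr (by simp))
        | true =>
          have hfu := ih u (by simp at hvlen; omega)
          have hVu : a * f u = f (u ++ [true]) := by
            rw [hfu, hfv]; simp [List.count_append]; ring
          have hmax := h4 (u ++ [true]) (by simp)
          rw [List.dropLast_concat] at hmax
          have hge := h2 ((u ++ [true]) ++ [false]) (by simp)
          rw [List.dropLast_concat] at hge
          have hge' : f (u ++ [true]) ≤ a * f ((u ++ [true]) ++ [false]) :=
            hge ▸ le_max_right _ _
          exact aux_step_norm b a (f (u ++ [true])) (f u) (f ((u ++ [true]) ++ [false]))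
            hbpos hapos hfvpos hVu hmax hge'
    rw [key, hfv]
    cases x <;> simp [List.count_append] <;> ring
end

section
/- Let (a_s)_{s ∈ (1/2)ℤ₊} be positive reals with a_0 = 1, and assume that max(a_{s+1/2}, a_{s−1/2}) = a_{1/2} a_s for all s ≥ 1/2 and that a_{1/2} = max(|ρ|, |ρ|^{−1}) for some ρ ∈ ℂ*. Then a_s = max(|ρ|, |ρ|⁻¹)^{2s}, and in particular a_s ≤ β^{2s} for all s if and only if 1/β ≤ |ρ| ≤ β. -/
/-- Half-integers encoded by doubles: `a s` stands for `‖v^{(s/2)}‖`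
for the character of Pol(SU_q(2)) determined by `ρ = φ(a) ∈ ℂ*`.  Assuming
`a 0 = 1`, `a 1 = max |ρ| |ρ|⁻¹` and the fusion recurrence
`max (a (s+1)) (a (s-1)) = a 1 · a s` for `s ≥ 1`, we get
`a s = max(|ρ|, |ρ|⁻¹)^s`, and `a s ≤ β^s` for all `s` iff `1/β ≤ |ρ| ≤ β`. -/
theorem character_spectrum_criterion (ρ : ℂ) (hρ : ρ ≠ 0) (β : ℝ) (hβ : 1 ≤ β)
    (a : ℕ → ℝ) (h0 : a 0 = 1) (h1 : a 1 = max ‖ρ‖ ‖ρ‖⁻¹)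
    (hrec : ∀ s : ℕ, 1 ≤ s → max (a (s + 1)) (a (s - 1)) = a 1 * a s) :
    (∀ s, a s = (max ‖ρ‖ ‖ρ‖⁻¹) ^ s) ∧
    ((∀ s, a s ≤ β ^ s) ↔ (1 / β ≤ ‖ρ‖ ∧ ‖ρ‖ ≤ β)) := by
  set m : ℝ := max ‖ρ‖ ‖ρ‖⁻¹ with hm
  have hρ0 : 0 < ‖ρ‖ := norm_pos_iff.mpr hρ
  have hm1 : 1 ≤ m := by
    rcases le_or_gt 1 ‖ρ‖ with h | h
    · exact h.trans (le_max_left _ _)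
    · exact (one_le_inv_iff₀.mpr ⟨hρ0, h.le⟩).trans (le_max_right _ _)
  have hm0 : 0 < m := lt_of_lt_of_le one_pos hm1
  have key : ∀ s, a s = m ^ s ∧ a (s + 1) = m ^ (s + 1) := by
    intro s
    induction s with
    | zero => exact ⟨by simpa using h0, by simpa using h1⟩
    | succ n ih =>
      obtain ⟨ihn, ihn1⟩ := ih
      refine ⟨ihn1, ?_⟩
      have hr := hrec (n + 1) (by omega)
      simp only [Nat.add_sub_cancel] at hr
      rw [h1, ihn, ihn1] at hr
      have hmax : max (a (n + 2)) (m ^ n) = m ^ (n + 2) := by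
        rw [hr]; ring
      have hub : a (n + 2) ≤ m ^ (n + 2) := hmax ▸ le_max_left _ _
      rcases eq_or_lt_of_le hm1 with heq | hlt
      · -- m = 1 : use the recurrence at n+2 for a lower bound
        have hr2 := hrec (n + 2) (by omega)
        simp only [show n + 2 - 1 = n + 1 from rfl] at hr2
        rw [h1, ihn1, ← heq] at hr2
        simp only [one_pow, one_mul] at hr2
        have hlb : (1:ℝ) ≤ a (n + 2) := hr2 ▸ le_max_right _ _
        rw [← heq] at hub ⊢
        simp only [one_pow] at hub ⊢
        show a (n + 2) = 1
        linarith
      · -- m > 1 : the other branch of the max is too small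
        have : m ^ n < m ^ (n + 2) := pow_lt_pow_right₀ hlt (by omega)
        rcases max_cases (a (n + 2)) (m ^ n) with ⟨h', _⟩ | ⟨h', _⟩
        · rw [← h', hmax]
        · rw [h'] at hmax; linarith
  have hall : ∀ s, a s = m ^ s := fun s => (key s).1
  refine ⟨hall, ?_⟩
  constructor
  · intro h
    have h1' : m ≤ β := by have := h 1; rw [hall 1, pow_one, pow_one] at this; exact this
    have hρβ : ‖ρ‖ ≤ β := (le_max_left _ _).trans h1'
    have hinv : ‖ρ‖⁻¹ ≤ β := (le_max_right _ _).trans h1'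
    refine ⟨?_, hρβ⟩
    rw [div_le_iff₀ (by linarith : (0:ℝ) < β)]
    nlinarith [mul_inv_cancel₀ hρ0.ne', inv_pos.mpr hρ0]
  · rintro ⟨hl, hr⟩
    intro s
    rw [hall s]
    rw [div_le_iff₀ (by linarith : (0:ℝ) < β)] at hl
    have hmβ : m ≤ β := by
      apply max_le hr
      nlinarith [mul_inv_cancel₀ hρ0.ne', inv_pos.mpr hρ0]
    exact pow_le_pow_left₀ hm0.le hmβ s
end
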